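/- Under the same hypotheses, Tr(Σ⁻¹ ΔΣ Σ⁻¹ ΔΣ) ≤ (x_max⁴ λ_max²(AAᵀ) / (x_min⁸ λ_min⁴(AAᵀ))) · ‖A(X̃² − X²)Aᵀ‖²_HS. -/

import Mathlib

open Matrix MeasureTheory ProbabilityTheory Real

noncomputable def sNorm {m n : ℕ} (M : Matrix (Fin m) (Fin n) ℝ) : ℝ :=
  ‖LinearMap.toContinuousLinearMap (Matrix.toEuclideanLin M)‖

noncomputable def sMin {m n : ℕ} (M : Matrix (Fin m) (Fin n) ℝ) : ℝ :=
  sInf {r | ∃ x : EuclideanSpace ℝ (Fin n), ‖x‖ = 1 ∧ r = ‖Matrix.toEuclideanLin M x‖}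

noncomputable def lamMax {n : ℕ} (M : Matrix (Fin n) (Fin n) ℝ) : ℝ :=
  sSup {μ : ℝ | Module.End.HasEigenvalue (Matrix.toEuclideanLin M) μ}

noncomputable def lamMin {n : ℕ} (M : Matrix (Fin n) (Fin n) ℝ) : ℝ :=
  sInf {μ : ℝ | Module.End.HasEigenvalue (Matrix.toEuclideanLin M) μ}

noncomputable def frobSq {m n : ℕ} (M : Matrix (Fin m) (Fin n) ℝ) : ℝ :=
  ∑ i, ∑ j, (M i j)^2

/-! With `S = AX²Aᵀ = Σ⁻¹`, `S̃ = AX̃²Aᵀ` and `N = S̃⁻¹(S̃ - S)` one has `ΔΣ = -N S⁻¹`, so the trace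
is `tr(N²) ≤ ‖N‖²_HS`. Since `S̃ ⪰ x_min² λ_min(AAᵀ) I`, the operator norm of `S̃⁻¹` is at most
`(x_min² λ_min)⁻¹`, whence `‖N‖²_HS ≤ ‖S̃ - S‖²_HS / (x_min⁴ λ_min²)`; this is below the stated
bound because `x_min ≤ x_max` and `λ_min ≤ λ_max`. -/

lemma trace_mul_inv_sub_inv {ι R : Type*} [Fintype ι] [DecidableEq ι] [CommRing R]
    {P Q : Matrix ι ι R} (hP : IsUnit P.det) (hQ : IsUnit Q.det) :
    trace (P * (Q⁻¹ - P⁻¹) * P * (Q⁻¹ - P⁻¹)) = trace (Q⁻¹ * (Q - P) * (Q⁻¹ * (Q - P))) := by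
  set N := Q⁻¹ * (Q - P)
  have hΔ : Q⁻¹ - P⁻¹ = -(N * P⁻¹) := by
    simp [N, Matrix.mul_sub, Matrix.sub_mul, nonsing_inv_mul _ hQ, Matrix.mul_assoc,
      mul_nonsing_inv _ hP]
  have hcancel : N * P⁻¹ * P = N := by rw [Matrix.mul_assoc, nonsing_inv_mul _ hP, Matrix.mul_one]
  rw [hΔ]
  simp only [mul_neg, neg_mul, neg_neg]
  rw [Matrix.mul_assoc P, hcancel, trace_mul_comm, ← Matrix.mul_assoc, hcancel]

section DotProduct

variable {ι κ : Type*} [Fintype ι] [Fintype κ]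

lemma dotProduct_mulVec_mul_diagonal_mul_transpose [DecidableEq κ] (A : Matrix ι κ ℝ)
    (d : κ → ℝ) (v : ι → ℝ) :
    v ⬝ᵥ ((A * diagonal d * Aᵀ) *ᵥ v) = ∑ j, d j * (Aᵀ *ᵥ v) j ^ 2 := by
  rw [← mulVec_mulVec, ← mulVec_mulVec, dotProduct_mulVec v A, ← mulVec_transpose]
  simp only [dotProduct, mulVec_diagonal]
  exact Finset.sum_congr rfl fun j _ ↦ by ring

lemma mul_dotProduct_mul_transpose_mulVec_le [DecidableEq κ] (A : Matrix ι κ ℝ) {a : ℝ}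
    {d : κ → ℝ} (hd : ∀ j, a ≤ d j) (v : ι → ℝ) :
    a * (v ⬝ᵥ ((A * Aᵀ) *ᵥ v)) ≤ v ⬝ᵥ ((A * diagonal d * Aᵀ) *ᵥ v) := by
  have hA : A * Aᵀ = A * diagonal (fun _ : κ ↦ (1 : ℝ)) * Aᵀ := by rw [diagonal_one, Matrix.mul_one]
  rw [hA, dotProduct_mulVec_mul_diagonal_mul_transpose,
    dotProduct_mulVec_mul_diagonal_mul_transpose, Finset.mul_sum]
  refine Finset.sum_le_sum fun j _ ↦ ?_
  rw [one_mul]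
  exact mul_le_mul_of_nonneg_right (hd j) (sq_nonneg _)

lemma inv_mulVec_dotProduct_le_of_coercive [DecidableEq ι] {P : Matrix ι ι ℝ} (hP : IsUnit P.det)
    {c : ℝ} (hc : 0 < c) (hcoer : ∀ v, c * (v ⬝ᵥ v) ≤ v ⬝ᵥ (P *ᵥ v)) (v : ι → ℝ) :
    (P⁻¹ *ᵥ v) ⬝ᵥ (P⁻¹ *ᵥ v) ≤ (c ^ 2)⁻¹ * (v ⬝ᵥ v) := by
  set w := P⁻¹ *ᵥ v
  have hPw : P *ᵥ w = v := by rw [mulVec_mulVec, mul_nonsing_inv _ hP, one_mulVec]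
  have hcw : c * (w ⬝ᵥ w) ≤ w ⬝ᵥ v := hPw ▸ hcoer w
  have hcs : (w ⬝ᵥ v) ^ 2 ≤ (w ⬝ᵥ w) * (v ⬝ᵥ v) := by
    simpa only [dotProduct, sq] using Finset.sum_mul_sq_le_sq_mul_sq Finset.univ w v
  have hww : 0 ≤ w ⬝ᵥ w := Finset.sum_nonneg fun i _ ↦ mul_self_nonneg (w i)
  rw [le_inv_mul_iff₀ (by positivity)]
  rcases hww.eq_or_lt with hw0 | hwpos
  · rw [← hw0, mul_zero]
    exact Finset.sum_nonneg fun i _ ↦ mul_self_nonneg (v i)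
  · have hsq : (c * (w ⬝ᵥ w)) ^ 2 ≤ (w ⬝ᵥ v) ^ 2 := pow_le_pow_left₀ (by positivity) hcw 2
    nlinarith

end DotProduct

section Frobenius

variable {m n k : ℕ}

lemma frobSq_nonneg (M : Matrix (Fin m) (Fin n) ℝ) : 0 ≤ frobSq M :=
  Finset.sum_nonneg fun _ _ ↦ Finset.sum_nonneg fun _ _ ↦ sq_nonneg _

lemma frobSq_eq_sum_dotProduct (M : Matrix (Fin m) (Fin n) ℝ) :
    frobSq M = ∑ j, Mᵀ j ⬝ᵥ Mᵀ j := by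
  rw [frobSq, Finset.sum_comm]
  simp [dotProduct, sq]

lemma trace_mul_self_le_frobSq (M : Matrix (Fin n) (Fin n) ℝ) : trace (M * M) ≤ frobSq M :=
  calc trace (M * M) = ∑ i, ∑ j, M i j * M j i := by simp [trace, mul_apply]
    _ ≤ ∑ i, ∑ j, (M i j ^ 2 + M j i ^ 2) / 2 := by
        gcongr with i _ j _
        nlinarith [sq_nonneg (M i j - M j i)]
    _ = frobSq M := by
        simp only [add_div, Finset.sum_add_distrib]
        rw [Finset.sum_comm (f := fun i j ↦ M j i ^ 2 / 2)]
        simp only [frobSq, ← Finset.sum_add_distrib, add_halves]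

lemma frobSq_mul_le {B : Matrix (Fin m) (Fin k) ℝ} {c : ℝ}
    (hB : ∀ v, (B *ᵥ v) ⬝ᵥ (B *ᵥ v) ≤ c * (v ⬝ᵥ v)) (D : Matrix (Fin k) (Fin n) ℝ) :
    frobSq (B * D) ≤ c * frobSq D := by
  rw [frobSq_eq_sum_dotProduct, frobSq_eq_sum_dotProduct, Finset.mul_sum]
  exact Finset.sum_le_sum fun j _ ↦ hB (Dᵀ j)

end Frobenius

section Eigenvalues

variable {k : ℕ} {A : Matrix (Fin k) (Fin k) ℝ}

lemma lamMin_eq_sInf_spectrum (A : Matrix (Fin k) (Fin k) ℝ) :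
    lamMin A = sInf (spectrum ℝ A) := by
  simp only [lamMin, Module.End.hasEigenvalue_iff_mem_spectrum, spectrum_toLpLin]
  rfl

lemma lamMax_eq_sSup_spectrum (A : Matrix (Fin k) (Fin k) ℝ) :
    lamMax A = sSup (spectrum ℝ A) := by
  simp only [lamMax, Module.End.hasEigenvalue_iff_mem_spectrum, spectrum_toLpLin]
  rfl

lemma lamMin_le_of_mem_spectrum {μ : ℝ} (hμ : μ ∈ spectrum ℝ A) : lamMin A ≤ μ :=
  lamMin_eq_sInf_spectrum A ▸ csInf_le A.finite_real_spectrum.bddBelow hμ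

open MatrixOrder in
lemma lamMin_mul_dotProduct_le (hA : A.IsHermitian) (v : Fin k → ℝ) :
    lamMin A * (v ⬝ᵥ v) ≤ v ⬝ᵥ (A *ᵥ v) := by
  have hle : algebraMap ℝ _ (lamMin A) ≤ A :=
    (algebraMap_le_iff_le_spectrum hA.isSelfAdjoint).2 fun _ ↦ lamMin_le_of_mem_spectrum
  simpa [sub_mulVec, Algebra.algebraMap_eq_smul_one, dotProduct_sub, smul_mulVec] using
    (le_iff.1 hle).re_dotProduct_nonneg v

variable [NeZero k]

lemma lamMin_pos (hA : A.PosDef) : 0 < lamMin A := by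
  rw [lamMin_eq_sInf_spectrum, hA.1.spectrum_real_eq_range_eigenvalues]
  obtain ⟨i, hi⟩ := (Set.range_nonempty hA.1.eigenvalues).csInf_mem (Set.finite_range _)
  exact hi ▸ hA.eigenvalues_pos i

lemma lamMin_le_lamMax (hA : A.IsHermitian) : lamMin A ≤ lamMax A := by
  rw [lamMin_eq_sInf_spectrum, lamMax_eq_sSup_spectrum, hA.spectrum_real_eq_range_eigenvalues]
  exact csInf_le_csSup (Set.range_nonempty _) (Set.finite_range _).bddBelow
    (Set.finite_range _).bddAbove

end Eigenvalues

lemma neZero_of_posDef_mul_transpose {m n : ℕ} [NeZero m] {A : Matrix (Fin m) (Fin n) ℝ}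
    (hA : (A * Aᵀ).PosDef) : NeZero n := by
  refine ⟨fun hn ↦ ?_⟩
  subst hn
  have hzero : A * Aᵀ = 0 := by
    ext i j
    simp [mul_apply]
  simpa [hzero] using hA.det_pos

theorem stmt4_general {m n : ℕ} (A : Matrix (Fin m) (Fin n) ℝ)
    (x xt : Fin n → ℝ) (xmin xmax : ℝ) (hxmin : 0 < xmin)
    (hxt : ∀ i, xt i ∈ Set.Icc xmin xmax)
    (hAA : (A * Aᵀ).PosDef)
    (hX : IsUnit (A * (Matrix.diagonal x) ^ 2 * Aᵀ).det)
    (hXt : IsUnit (A * (Matrix.diagonal xt) ^ 2 * Aᵀ).det) :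
    Matrix.trace
      (((A * (Matrix.diagonal x) ^ 2 * Aᵀ)⁻¹)⁻¹ *
        ((A * (Matrix.diagonal xt) ^ 2 * Aᵀ)⁻¹ - (A * (Matrix.diagonal x) ^ 2 * Aᵀ)⁻¹) *
        ((A * (Matrix.diagonal x) ^ 2 * Aᵀ)⁻¹)⁻¹ *
        ((A * (Matrix.diagonal xt) ^ 2 * Aᵀ)⁻¹ - (A * (Matrix.diagonal x) ^ 2 * Aᵀ)⁻¹)) ≤
      (xmax ^ 4 * lamMax (A * Aᵀ) ^ 2 / (xmin ^ 8 * lamMin (A * Aᵀ) ^ 4)) *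
        frobSq (A * ((Matrix.diagonal xt) ^ 2 - (Matrix.diagonal x) ^ 2) * Aᵀ) := by
  rcases eq_or_ne m 0 with rfl | hm
  · simp [trace, frobSq]
  have : NeZero m := ⟨hm⟩
  have : NeZero n := neZero_of_posDef_mul_transpose hAA
  set L := lamMin (A * Aᵀ)
  have hL : 0 < L := lamMin_pos hAA
  have hcoer : ∀ v, xmin ^ 2 * L * (v ⬝ᵥ v) ≤ v ⬝ᵥ ((A * diagonal xt ^ 2 * Aᵀ) *ᵥ v) := fun v ↦
    calc xmin ^ 2 * L * (v ⬝ᵥ v) ≤ xmin ^ 2 * (v ⬝ᵥ ((A * Aᵀ) *ᵥ v)) := by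
          rw [mul_assoc]; gcongr; exact lamMin_mul_dotProduct_le hAA.1 v
      _ ≤ _ := by
          rw [diagonal_pow]
          exact mul_dotProduct_mul_transpose_mulVec_le A
            (fun i ↦ pow_le_pow_left₀ hxmin.le (hxt i).1 2) v
  have hcoef : ((xmin ^ 2 * L) ^ 2)⁻¹ ≤ xmax ^ 4 * lamMax (A * Aᵀ) ^ 2 / (xmin ^ 8 * L ^ 4) :=
    calc ((xmin ^ 2 * L) ^ 2)⁻¹ = xmin ^ 4 * L ^ 2 / (xmin ^ 8 * L ^ 4) := by
          field_simp
      _ ≤ _ := by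
          gcongr
          · exact (hxt 0).1.trans (hxt 0).2
          · exact lamMin_le_lamMax hAA.1
  rw [nonsing_inv_nonsing_inv _ hX, trace_mul_inv_sub_inv hX hXt, ← Matrix.sub_mul,
    ← Matrix.mul_sub]
  calc _ ≤ frobSq _ := trace_mul_self_le_frobSq _
    _ ≤ ((xmin ^ 2 * L) ^ 2)⁻¹ * frobSq _ :=
        frobSq_mul_le (inv_mulVec_dotProduct_le_of_coercive hXt (by positivity) hcoer) _
    _ ≤ _ := mul_le_mul_of_nonneg_right hcoef (frobSq_nonneg _)

/-- Upper bound for Tr(Σ⁻¹ ΔΣ Σ⁻¹ ΔΣ). -/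
theorem stmt4 {m n : ℕ} (A : Matrix (Fin m) (Fin n) ℝ)
    (x xt : Fin n → ℝ) (xmin xmax : ℝ) (hxmin : 0 < xmin)
    (hx : ∀ i, x i ∈ Set.Icc xmin xmax) (hxt : ∀ i, xt i ∈ Set.Icc xmin xmax)
    (hAA : (A * Aᵀ).PosDef)
    (hX : IsUnit (A * (Matrix.diagonal x) ^ 2 * Aᵀ).det)
    (hXt : IsUnit (A * (Matrix.diagonal xt) ^ 2 * Aᵀ).det) :
    Matrix.trace
      (((A * (Matrix.diagonal x) ^ 2 * Aᵀ)⁻¹)⁻¹ *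
        ((A * (Matrix.diagonal xt) ^ 2 * Aᵀ)⁻¹ - (A * (Matrix.diagonal x) ^ 2 * Aᵀ)⁻¹) *
        ((A * (Matrix.diagonal x) ^ 2 * Aᵀ)⁻¹)⁻¹ *
        ((A * (Matrix.diagonal xt) ^ 2 * Aᵀ)⁻¹ - (A * (Matrix.diagonal x) ^ 2 * Aᵀ)⁻¹)) ≤
      (xmax ^ 4 * lamMax (A * Aᵀ) ^ 2 / (xmin ^ 8 * lamMin (A * Aᵀ) ^ 4)) *
        frobSq (A * ((Matrix.diagonal xt) ^ 2 - (Matrix.diagonal x) ^ 2) * Aᵀ) :=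
  stmt4_general A x xt xmin xmax hxmin hxt hAA hX hXt
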